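/- arXiv:2401.08535 — 2 statements merged into one kernel-verified Lean document; each statement's English description precedes it below -/
import Mathlib

section
/- If I is an ideal of a ring R such that I^n is nil-essential for some n ≥ 1, then I is nil-essential. -/
def TIdealNilpotent {R : Type*} [Ring R] (μ : TwoSidedIdeal R) : Prop :=
  ∃ n : ℕ, 0 < n ∧ ∀ f : Fin n → R, (∀ i, f i ∈ μ) → (List.ofFn f).prod = 0

def TNilEssential {R : Type*} [Ring R] (I : TwoSidedIdeal R) : Prop :=
  ∀ μ : TwoSidedIdeal R, I ⊓ μ = ⊥ → TIdealNilpotent μ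

/-- The `n`-th power of a two-sided ideal: the two-sided ideal generated by
products of `n` elements of `I`. -/
def tIdealPow {R : Type*} [Ring R] (I : TwoSidedIdeal R) (n : ℕ) : TwoSidedIdeal R :=
  TwoSidedIdeal.span {x | ∃ f : Fin n → R, (∀ i, f i ∈ I) ∧ x = (List.ofFn f).prod}

theorem TNilEssential.mono {R : Type*} [Ring R] {I J : TwoSidedIdeal R} (hJI : J ≤ I)
    (hJ : TNilEssential J) : TNilEssential I :=
  fun μ hμ => hJ μ <| eq_bot_iff.mpr <| hμ ▸ inf_le_inf_right μ hJI

theorem tIdealPow_le {R : Type*} [Ring R] (I : TwoSidedIdeal R) {n : ℕ} (hn : n ≠ 0) :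
    tIdealPow I n ≤ I := by
  obtain ⟨m, rfl⟩ := Nat.exists_eq_succ_of_ne_zero hn
  refine TwoSidedIdeal.span_le.mpr ?_
  rintro _ ⟨f, hf, rfl⟩
  rw [List.ofFn_succ, List.prod_cons]
  exact I.mul_mem_right _ _ (hf 0)

theorem stmt4 {R : Type*} [Ring R] (I : TwoSidedIdeal R) (n : ℕ) (hn : 1 ≤ n)
    (h : TNilEssential (tIdealPow I n)) : TNilEssential I :=
  h.mono (tIdealPow_le I (by omega))
end

section
/- Let R be a commutative Noetherian ring and I ⊆ J non-zero ideals. Then I is nil-essential in J if and only if for each non-nilpotent element x ∈ J there exists r ∈ R such that rx ∈ I and rx ≠ 0. -/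
def IdealNilpotentC {A : Type*} [CommRing A] (μ : Ideal A) : Prop :=
  ∃ n : ℕ, 0 < n ∧ μ ^ n = ⊥

def NilEssentialInC {A : Type*} [CommRing A] (I K : Ideal A) : Prop :=
  ∀ μ : Ideal A, μ ≤ K → I ⊓ μ = ⊥ → IdealNilpotentC μ

/-!
Over a Noetherian ring an ideal is nilpotent exactly when it lies in the nilradical, so
`I` is nil-essential in `J` iff every `x ∈ J` with `I ∩ Rx = 0` is nilpotent; and `I ∩ Rx ≠ 0`
says precisely that some multiple `r * x` is a non-zero element of `I`.
-/

open Ideal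

theorem idealNilpotentC_iff_isNilpotent {R : Type*} [CommRing R] (μ : Ideal R) :
    IdealNilpotentC μ ↔ IsNilpotent μ := by
  refine ⟨fun ⟨n, _, hn⟩ => ⟨n, hn⟩, fun ⟨n, hn⟩ => ⟨n + 1, n.succ_pos, ?_⟩⟩
  exact le_bot_iff.mp ((pow_le_pow_right n.le_succ).trans hn.le)

theorem idealNilpotentC_iff_le_nilradical {R : Type*} [CommRing R] [IsNoetherianRing R]
    (μ : Ideal R) : IdealNilpotentC μ ↔ μ ≤ nilradical R := by
  rw [idealNilpotentC_iff_isNilpotent,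
    Ideal.FG.isNilpotent_iff_le_nilradical (IsNoetherian.noetherian μ)]

theorem inf_span_singleton_eq_bot_iff {R : Type*} [CommRing R] (I : Ideal R) (x : R) :
    I ⊓ span {x} = ⊥ ↔ ∀ r : R, r * x ∈ I → r * x = 0 := by
  simp only [eq_bot_iff, SetLike.le_def, Submodule.mem_inf, mem_span_singleton',
    Submodule.mem_bot]
  constructor
  · exact fun h r hr => h ⟨hr, r, rfl⟩
  · rintro h _ ⟨hy, r, rfl⟩
    exact h r hy

theorem nilEssentialInC_iff_forall_mem {R : Type*} [CommRing R] [IsNoetherianRing R]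
    (I J : Ideal R) :
    NilEssentialInC I J ↔ ∀ x ∈ J, I ⊓ span {x} = ⊥ → IsNilpotent x := by
  simp only [NilEssentialInC, idealNilpotentC_iff_le_nilradical]
  constructor
  · intro h x hxJ hx
    have hspan : span {x} ≤ J := (span_singleton_le_iff_mem J).mpr hxJ
    exact mem_nilradical.mp ((span_singleton_le_iff_mem _).mp (h _ hspan hx))
  · intro h μ hμJ hμ x hxμ
    have hx : I ⊓ span {x} = ⊥ :=
      le_bot_iff.mp (hμ ▸ inf_le_inf_left I ((span_singleton_le_iff_mem μ).mpr hxμ))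
    exact mem_nilradical.mpr (h x (hμJ hxμ) hx)

theorem stmt12_general {R : Type*} [CommRing R] [IsNoetherianRing R] (I J : Ideal R) :
    NilEssentialInC I J ↔
      ∀ x ∈ J, ¬ IsNilpotent x → ∃ r : R, r * x ∈ I ∧ r * x ≠ 0 := by
  simp only [nilEssentialInC_iff_forall_mem, inf_span_singleton_eq_bot_iff]
  refine forall₂_congr fun x _ => ?_
  rw [← not_imp_not]
  simp only [not_forall, ne_eq, exists_prop]

theorem stmt12 {R : Type*} [CommRing R] [IsNoetherianRing R] (I J : Ideal R)
    (hI : I ≠ ⊥) (hJ : J ≠ ⊥) (hIJ : I ≤ J) :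
    NilEssentialInC I J ↔
      ∀ x ∈ J, ¬ IsNilpotent x → ∃ r : R, r * x ∈ I ∧ r * x ≠ 0 :=
  stmt12_general I J
end
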